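/- Let (G, 𝒞) be a linear biased graph. If C is an unbalanced cycle and T is a spanning tree of G with E(C) ∩ E(T) = ∅, then there exists an edge e ∈ E(C) whose fundamental cycle C(e,T) is unbalanced. -/

import Mathlib

open Finset
open scoped symmDiff Classical

/-- A multigraph: each edge carries an unordered pair of endpoints. -/
structure Multigraph (V : Type*) (E : Type*) where
  ends : E → Sym2 V

namespace Multigraph

variable {V E : Type*} (G : Multigraph V E)

/-- Edge `e` is incident with vertex `w`. -/
def Inc (e : E) (w : V) : Prop := w ∈ G.ends e

/-- `e` is a loop. -/
def IsLoopEdge (e : E) : Prop := (G.ends e).IsDiag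

/-- Multiplicity of a vertex in an edge: `2` for a loop at the vertex, `1` if incident,
`0` otherwise. -/
noncomputable def mult (e : E) (w : V) : ℕ :=
  if G.ends e = Sym2.diag w then 2 else if w ∈ G.ends e then 1 else 0

/-- Degree of `w` with respect to the edge set `A` (loops counted twice). -/
noncomputable def deg (A : Finset E) (w : V) : ℕ := ∑ e ∈ A, G.mult e w

/-- Two edges of `A` sharing a vertex. -/
def AdjIn (A : Finset E) (e f : E) : Prop :=
  e ∈ A ∧ f ∈ A ∧ ∃ w, G.Inc e w ∧ G.Inc f w

/-- The edge set `A` induces a connected subgraph. -/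
def EdgeConnected (A : Finset E) : Prop :=
  ∀ e ∈ A, ∀ f ∈ A, Relation.ReflTransGen (G.AdjIn A) e f

/-- `A` is the edge set of a cycle: nonempty, connected, and every vertex has degree
`0` or `2` in `A`. -/
def IsCycle (A : Finset E) : Prop :=
  A.Nonempty ∧ G.EdgeConnected A ∧ ∀ w, G.deg A w = 0 ∨ G.deg A w = 2

/-- The set of vertices met by the edge set `A`. -/
def Supp (A : Finset E) : Set V := { w | ∃ e ∈ A, G.Inc e w }

/-- `A` is the edge set of a path from `u` to `w`. -/
def IsPath (A : Finset E) (u w : V) : Prop :=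
  u ≠ w ∧ G.EdgeConnected A ∧ G.deg A u = 1 ∧ G.deg A w = 1 ∧
    ∀ x, x ≠ u → x ≠ w → (G.deg A x = 0 ∨ G.deg A x = 2)

/-- Vertices joined by a walk using edges of `A`. -/
def Reach (A : Finset E) (a b : V) : Prop :=
  Relation.ReflTransGen (fun x y => ∃ e ∈ A, G.Inc e x ∧ G.Inc e y) a b

/-- `T` is a spanning tree: every pair of vertices is joined by `T` and `T` contains
no cycle. -/
def IsSpanningTree (T : Finset E) : Prop :=
  (∀ a b : V, G.Reach T a b) ∧ ∀ C ⊆ T, ¬ G.IsCycle C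

/-- `C` is the fundamental cycle of the edge `e` with respect to the spanning tree `T`. -/
def IsFundCycle (T : Finset E) (e : E) (C : Finset E) : Prop :=
  G.IsCycle C ∧ e ∈ C ∧ C ⊆ insert e T

end Multigraph

/-- Symmetric difference of a list of finsets. -/
def listSymmDiff {E : Type*} [DecidableEq E] (L : List (Finset E)) : Finset E :=
  L.foldr (· ∆ ·) ∅

/-- A linear biased graph: a multigraph together with a class `Bal` of *balanced* cycles
satisfying the theta property and closed under taking cycles that are symmetric
differences of balanced cycles. -/
structure LinearBiasedGraph (V E : Type*) [DecidableEq E] where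
  G : Multigraph V E
  Bal : Set (Finset E)
  bal_cycle : ∀ C ∈ Bal, G.IsCycle C
  theta : ∀ C₁ C₂ C₃ : Finset E, G.IsCycle C₁ → G.IsCycle C₂ → G.IsCycle C₃ →
    C₃ = C₁ ∆ C₂ → C₁ ∈ Bal → C₂ ∈ Bal → C₃ ∈ Bal
  linear : ∀ L : List (Finset E), (∀ D ∈ L, D ∈ Bal) →
    ∀ C : Finset E, G.IsCycle C → C = listSymmDiff L → C ∈ Bal

namespace LinearBiasedGraph

variable {V E : Type*} [DecidableEq E] (Ω : LinearBiasedGraph V E)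

/-- Independent sets of the frame matroid `M(Ω)`: edge sets containing no balanced cycle
and no two distinct cycles lying in a common component. -/
def FrameIndep (A : Finset E) : Prop :=
  (∀ C ⊆ A, Ω.G.IsCycle C → C ∉ Ω.Bal) ∧
  ∀ C₁ C₂ : Finset E, C₁ ⊆ A → C₂ ⊆ A → Ω.G.IsCycle C₁ → Ω.G.IsCycle C₂ → C₁ ≠ C₂ →
    ∀ e₁ ∈ C₁, ∀ e₂ ∈ C₂, ¬ Relation.ReflTransGen (Ω.G.AdjIn A) e₁ e₂

/-- Bases of the frame matroid `M(Ω)`: maximal independent sets. -/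
def FrameBase (B : Finset E) : Prop :=
  Ω.FrameIndep B ∧ ∀ A : Finset E, Ω.FrameIndep A → B ⊆ A → A = B

/-- Circuits of the frame matroid `M(Ω)`: minimal dependent sets. -/
def FrameCircuit (C : Finset E) : Prop :=
  ¬ Ω.FrameIndep C ∧ ∀ C' ⊂ C, Ω.FrameIndep C'

variable {κ : ℕ}

/-- A single symmetric exchange between two members of a sequence of bases. -/
def SymExchStep (𝓑 𝓑' : Fin κ → Finset E) : Prop :=
  ∃ i j : Fin κ, i ≠ j ∧ ∃ e ∈ 𝓑 i, ∃ f ∈ 𝓑 j,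
    Ω.FrameBase (insert f (𝓑 i \ {e})) ∧ Ω.FrameBase (insert e (𝓑 j \ {f})) ∧
    𝓑' i = insert f (𝓑 i \ {e}) ∧ 𝓑' j = insert e (𝓑 j \ {f}) ∧
    ∀ t : Fin κ, t ≠ i → t ≠ j → 𝓑' t = 𝓑 t

/-- `𝓑'` is obtained from `𝓑` by a finite sequence of symmetric exchanges. -/
def ExchReachable (𝓑 𝓑' : Fin κ → Finset E) : Prop :=
  Relation.ReflTransGen Ω.SymExchStep 𝓑 𝓑'

end LinearBiasedGraph

section VCount

variable {V : Type*}

/-- Count of occurrences of `x` in a list, via `if`. -/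
noncomputable def vcount (x : V) : List V → ℕ
  | [] => 0
  | y :: l => (if y = x then 1 else 0) + vcount x l

@[simp] lemma vcount_nil (x : V) : vcount x ([] : List V) = 0 := rfl

@[simp] lemma vcount_cons (x y : V) (l : List V) :
    vcount x (y :: l) = (if y = x then 1 else 0) + vcount x l := rfl

lemma vcount_append (x : V) (l₁ l₂ : List V) :
    vcount x (l₁ ++ l₂) = vcount x l₁ + vcount x l₂ := by
  induction l₁ with
  | nil => simp
  | cons y l ih => simp [ih]; omega

lemma vcount_le_length (x : V) (l : List V) : vcount x l ≤ l.length := by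
  induction l with
  | nil => simp
  | cons y l ih => simp only [vcount_cons, List.length_cons]; split <;> omega

lemma vcount_pos_of_mem {x : V} {l : List V} (h : x ∈ l) : 0 < vcount x l := by
  induction l with
  | nil => simp at h
  | cons y l ih =>
    rcases List.mem_cons.1 h with h | h
    · subst h; simp
    · have := ih h; simp only [vcount_cons]; omega

lemma mem_of_vcount_pos {x : V} {l : List V} (h : 0 < vcount x l) : x ∈ l := by
  induction l with
  | nil => simp at h
  | cons y l ih =>
    simp only [vcount_cons] at h
    by_cases hyx : y = x
    · subst hyx; exact List.mem_cons_self
    · simp [hyx] at h; exact List.mem_cons_of_mem _ (ih h)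

lemma vcount_eq_zero_of_not_mem {x : V} {l : List V} (h : x ∉ l) : vcount x l = 0 := by
  by_contra hc
  exact h (mem_of_vcount_pos (Nat.pos_of_ne_zero hc))

lemma vcount_le_one_of_nodup {l : List V} (h : l.Nodup) (x : V) : vcount x l ≤ 1 := by
  induction l with
  | nil => simp
  | cons y l ih =>
    rcases List.nodup_cons.1 h with ⟨hy, hl⟩
    simp only [vcount_cons]
    by_cases hyx : y = x
    · subst hyx
      have := vcount_eq_zero_of_not_mem hy
      simp [this]
    · simp [hyx]; exact ih hl

lemma exists_two_le_vcount_of_not_nodup {l : List V} (h : ¬ l.Nodup) :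
    ∃ x, 2 ≤ vcount x l := by
  induction l with
  | nil => simp at h
  | cons y l ih =>
    by_cases hy : y ∈ l
    · refine ⟨y, ?_⟩
      have := vcount_pos_of_mem hy
      have h2 : vcount y (y :: l) = 1 + vcount y l := by simp
      rw [h2]; omega
    · have hnl : ¬ l.Nodup := fun hl => h (List.nodup_cons.2 ⟨hy, hl⟩)
      obtain ⟨x, hx⟩ := ih hnl
      exact ⟨x, by simp only [vcount_cons]; omega⟩

lemma dropLast_append_of_ne_nil (l₁ : List V) {l₂ : List V} (h : l₂ ≠ []) :
    (l₁ ++ l₂).dropLast = l₁ ++ l₂.dropLast := by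
  induction l₁ with
  | nil => simp
  | cons y l ih =>
    have : l ++ l₂ ≠ [] := by
      simp [List.append_eq_nil_iff]
      intro _; exact h
    rw [List.cons_append, List.dropLast_cons_of_ne_nil this, ih, List.cons_append]

lemma vcount_dropLast (x : V) {l : List V} (h : l ≠ []) :
    vcount x l = vcount x l.dropLast + (if l.getLast h = x then 1 else 0) := by
  conv_lhs => rw [← List.dropLast_append_getLast h]
  rw [vcount_append]; simp

end VCount
namespace Multigraph

variable {V E : Type*}

/-- A trail in edge set `S`: a walk with pairwise distinct edges.  `Trail G S u w es vs`
means `es` is the edge list and `vs` the vertex list, from `u` to `w`. -/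
inductive Trail (G : Multigraph V E) (S : Finset E) : V → V → List E → List V → Prop
  | nil (v : V) : Trail G S v v [] [v]
  | cons {u v w : V} {e : E} {es : List E} {vs : List V} :
      e ∈ S → G.ends e = s(u, v) → Trail G S v w es vs → e ∉ es →
        Trail G S u w (e :: es) (u :: vs)

namespace Trail

variable {G : Multigraph V E} {S : Finset E} {u w : V} {es : List E} {vs : List V}

lemma mem_S (h : Trail G S u w es vs) : ∀ e ∈ es, e ∈ S := by
  induction h with
  | nil => simp
  | cons he _ _ _ ih =>
    intro f hf
    rcases List.mem_cons.1 hf with hf | hf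
    · subst hf; exact he
    · exact ih f hf

lemma nodup (h : Trail G S u w es vs) : es.Nodup := by
  induction h with
  | nil => simp
  | cons _ _ _ hni ih => exact List.nodup_cons.2 ⟨hni, ih⟩

lemma exists_tail (h : Trail G S u w es vs) : ∃ t, vs = u :: t := by
  cases h with
  | nil => exact ⟨[], rfl⟩
  | cons _ _ _ _ => exact ⟨_, rfl⟩

lemma vs_ne_nil (h : Trail G S u w es vs) : vs ≠ [] := by
  obtain ⟨t, ht⟩ := h.exists_tail; simp [ht]

lemma length_vs (h : Trail G S u w es vs) : vs.length = es.length + 1 := by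
  induction h with
  | nil => rfl
  | cons _ _ _ _ ih => simp [ih]

lemma getLast_eq (h : Trail G S u w es vs) : vs.getLast h.vs_ne_nil = w := by
  induction h with
  | nil => rfl
  | cons _ _ ht _ ih => rw [List.getLast_cons ht.vs_ne_nil]; exact ih

lemma start_mem_ends {e : E} {es' : List E} (h : Trail G S u w (e :: es') vs) :
    u ∈ G.ends e := by
  cases h with
  | cons _ hends _ _ => rw [hends]; exact Sym2.mem_mk_left _ _

/-- The key degree identity for a trail. -/
lemma deg_identity (h : Trail G S u w es vs) (x : V) :
    G.deg es.toFinset x + (if x = u then 1 else 0) + (if x = w then 1 else 0)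
      = 2 * vcount x vs := by
  induction h with
  | nil v =>
    have : G.deg (∅ : Finset E) x = 0 := by simp [Multigraph.deg]
    simp only [List.toFinset_nil, this, vcount_cons, vcount_nil]
    by_cases hx : x = v <;> simp [hx, eq_comm]
  | @cons u' v' w' e es' vs' he hends ht hni ih =>
    have hmult : G.mult e x = (if x = u' then 1 else 0) + (if x = v' then 1 else 0) := by
      unfold Multigraph.mult
      rw [hends]
      by_cases hxu : x = u' <;> by_cases hxv : x = v'
      · subst hxu; subst hxv
        have : s(x, x) = Sym2.diag x := rfl
        simp [this]
      · subst hxu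
        have h1 : ¬ (s(x, v') = Sym2.diag x) := by
          intro hcon
          rw [show Sym2.diag x = s(x,x) from rfl, Sym2.eq_iff] at hcon
          tauto
        simp [h1, Sym2.mem_iff, hxv]
      · subst hxv
        have h1 : ¬ (s(u', x) = Sym2.diag x) := by
          intro hcon
          rw [show Sym2.diag x = s(x,x) from rfl, Sym2.eq_iff] at hcon
          tauto
        simp [h1, Sym2.mem_iff, hxu]
      · have h1 : ¬ (s(u', v') = Sym2.diag x) := by
          intro hcon
          rw [show Sym2.diag x = s(x,x) from rfl, Sym2.eq_iff] at hcon
          tauto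
        simp [h1, Sym2.mem_iff, hxu, hxv]
    have hdeg : G.deg (e :: es').toFinset x = G.mult e x + G.deg es'.toFinset x := by
      rw [List.toFinset_cons]
      unfold Multigraph.deg
      rw [Finset.sum_insert (by simpa using hni)]
    rw [hdeg, hmult, vcount_cons]
    by_cases h1 : x = u' <;> by_cases h2 : x = v' <;> by_cases h3 : x = w' <;>
      simp only [h1, h2, h3, if_pos, if_neg, eq_comm] at ih ⊢ <;>
      simp_all <;> omega

end Trail

end Multigraph
namespace Multigraph

namespace Trail

variable {V E : Type*} {G : Multigraph V E} {S : Finset E} {u w : V} {es : List E} {vs : List V}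

lemma split (h : Trail G S u w es vs) (x : V) (hx : x ∈ vs) :
    ∃ es₁ es₂ vs₁ vs₂, Trail G S u x es₁ vs₁ ∧ Trail G S x w es₂ vs₂ ∧
      es = es₁ ++ es₂ ∧ vs = vs₁.dropLast ++ vs₂ ∧ vcount x vs₁ = 1 := by
  induction h with
  | nil v =>
    have hxv : x = v := by simpa using hx
    subst hxv
    exact ⟨[], [], [x], [x], Trail.nil x, Trail.nil x, rfl, rfl, by simp⟩
  | @cons u' v' w' e es' vs' he hends ht hni ih =>
    by_cases hxu : x = u'
    · subst hxu
      exact ⟨[], e :: es', [x], x :: vs', Trail.nil x, Trail.cons he hends ht hni,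
        rfl, rfl, by simp⟩
    · have hx' : x ∈ vs' := by
        rcases List.mem_cons.1 hx with h1 | h1
        · exact absurd h1 hxu
        · exact h1
      obtain ⟨es₁, es₂, vs₁, vs₂, h1, h2, he1, hv1, hc1⟩ := ih hx'
      refine ⟨e :: es₁, es₂, u' :: vs₁, vs₂, ?_, h2, by rw [he1]; rfl, ?_, ?_⟩
      · exact Trail.cons he hends h1 (fun hmem => hni (he1 ▸ List.mem_append_left _ hmem))
      · obtain ⟨t, ht'⟩ := h1.exists_tail
        rw [ht']
        rw [ht'] at hv1
        rw [List.dropLast_cons_of_ne_nil (by simp), List.cons_append, ← hv1]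
      · rw [vcount_cons, if_neg (fun hh => hxu hh.symm), hc1]

lemma append {v : V} {es₁ es₂ : List E} {vs₁ vs₂ : List V}
    (h₁ : Trail G S u v es₁ vs₁) (h₂ : Trail G S v w es₂ vs₂)
    (hd : ∀ e ∈ es₁, e ∉ es₂) :
    Trail G S u w (es₁ ++ es₂) (vs₁.dropLast ++ vs₂) := by
  induction h₁ with
  | nil v' => simpa using h₂
  | @cons a b c e es' vs' he hends ht hni ih =>
    have hih := ih h₂ (fun f hf => hd f (List.mem_cons_of_mem _ hf))
    have hvs' : vs' ≠ [] := ht.vs_ne_nil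
    rw [List.cons_append, List.dropLast_cons_of_ne_nil hvs', List.cons_append]
    refine Trail.cons he hends hih ?_
    intro hmem
    rcases List.mem_append.1 hmem with h1 | h1
    · exact hni h1
    · exact hd e List.mem_cons_self h1

lemma adjIn_symm {A : Finset E} {e f : E} (h : G.AdjIn A e f) : G.AdjIn A f e := by
  obtain ⟨h1, h2, x, h3, h4⟩ := h
  exact ⟨h2, h1, x, h4, h3⟩

lemma adjIn_mono {A B : Finset E} (hAB : A ⊆ B) {e f : E} (h : G.AdjIn A e f) :
    G.AdjIn B e f := by
  obtain ⟨h1, h2, x, h3, h4⟩ := h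
  exact ⟨hAB h1, hAB h2, x, h3, h4⟩

lemma head_conn (h : Trail G S u w es vs) {e : E} {es' : List E} (heq : es = e :: es') :
    ∀ f ∈ es, Relation.ReflTransGen (G.AdjIn es.toFinset) e f := by
  induction h generalizing e es' with
  | nil => simp at heq
  | @cons a b c e₀ es₀ vs₀ he hends ht hni ih =>
    injection heq with heq1 heq2
    subst heq1; subst heq2
    intro f hf
    rcases List.mem_cons.1 hf with hf | hf
    · subst hf; exact Relation.ReflTransGen.refl
    · cases hes : es₀ with
      | nil => subst hes; simp at hf
      | cons e₁ es₁ =>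
        subst hes
        have hconn := ih rfl f hf
        have hmono : ∀ a b, G.AdjIn (e₁ :: es₁).toFinset a b →
            G.AdjIn (e₀ :: e₁ :: es₁).toFinset a b := by
          intro a b hab
          exact adjIn_mono (by intro z hz; simp at hz ⊢; tauto) hab
        have hstep : G.AdjIn (e₀ :: e₁ :: es₁).toFinset e₀ e₁ := by
          refine ⟨by simp, by simp, b, ?_, ?_⟩
          · rw [Multigraph.Inc, hends]; exact Sym2.mem_mk_right _ _
          · exact ht.start_mem_ends
        exact Relation.ReflTransGen.head hstep (Relation.ReflTransGen.mono hmono _ _ hconn)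

lemma edgeConnected (h : Trail G S u w es vs) : G.EdgeConnected es.toFinset := by
  intro a ha b hb
  rw [List.mem_toFinset] at ha hb
  cases hes : es with
  | nil => subst hes; simp at ha
  | cons e es' =>
    subst hes
    have h1 := h.head_conn rfl a ha
    have h2 := h.head_conn rfl b hb
    have hsymm : Symmetric (G.AdjIn (e :: es').toFinset) := fun _ _ => adjIn_symm
    exact Relation.ReflTransGen.trans (by haveI : Std.Symm (G.AdjIn (e :: es').toFinset) := ⟨hsymm⟩; exact Std.Symm.symm _ _ h1) h2

end Trail

end Multigraph
namespace Multigraph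

namespace Trail

variable {V E : Type*} {G : Multigraph V E} {S : Finset E}

lemma peel {u w : V} {es : List E} {vs : List V}
    (h : Trail G S u w es vs) (hne : es ≠ []) :
    ∃ e y es' vs', es = e :: es' ∧ vs = u :: vs' ∧ e ∈ S ∧ G.ends e = s(u, y) ∧
      Trail G S y w es' vs' ∧ e ∉ es' := by
  cases h with
  | nil => exact absurd rfl hne
  | cons he hends ht hni => exact ⟨_, _, _, _, rfl, rfl, he, hends, ht, hni⟩

/-- A closed trail contains (the edge set of) a cycle. -/
lemma closed_cycle :
    ∀ n : ℕ, ∀ es : List E, es.length ≤ n → es ≠ [] →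
    ∀ (u : V) (vs : List V), Trail G S u u es vs →
      ∃ D : Finset E, (∀ x ∈ D, x ∈ es) ∧ G.IsCycle D := by
  intro n
  induction n with
  | zero =>
    intro es hlen hne
    interval_cases h : es.length
    · exact absurd (List.length_eq_zero_iff.1 h) hne
  | succ n ih =>
    intro es hlen hne u vs h
    by_cases hnd : vs.dropLast.Nodup
    · -- the trail is (vertex-)simple: its edge set is a cycle
      refine ⟨es.toFinset, fun x hx => List.mem_toFinset.1 hx, ?_, h.edgeConnected, ?_⟩
      · obtain ⟨e, es', rfl⟩ : ∃ e es', es = e :: es' := by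
          cases es with
          | nil => exact absurd rfl hne
          | cons e es' => exact ⟨e, es', rfl⟩
        exact ⟨e, by simp⟩
      · intro x
        have hid := h.deg_identity x
        have hdc := vcount_dropLast x h.vs_ne_nil
        rw [h.getLast_eq] at hdc
        have hn1 := vcount_le_one_of_nodup hnd x
        by_cases hxu : x = u
        · subst hxu
          rw [if_pos rfl] at hid
          rw [if_pos rfl] at hdc
          omega
        · rw [if_neg hxu] at hid
          rw [if_neg (fun hh => hxu hh.symm)] at hdc
          omega
    · -- find a strictly shorter closed subtrail and recurse
      obtain ⟨x, hx2⟩ := exists_two_le_vcount_of_not_nodup hnd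
      have hxvs : x ∈ vs := by
        apply mem_of_vcount_pos
        have := vcount_dropLast x h.vs_ne_nil
        omega
      obtain ⟨es₁, es₂, vs₁, vs₂, h1, h2, he, hv, hc1⟩ := h.split x hxvs
      have hnodup := h.nodup
      rw [he] at hnodup
      have hdisj : ∀ f ∈ es₂, f ∉ es₁ := by
        rcases List.nodup_append.1 hnodup with ⟨_, _, hd⟩
        intro f hf2 hf1
        exact hd f hf1 f hf2 rfl
      have h' : Trail G S x x (es₂ ++ es₁) (vs₂.dropLast ++ vs₁) := h2.append h1 hdisj
      -- count bookkeeping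
      have hlast₁ : vs₁.getLast h1.vs_ne_nil = x := h1.getLast_eq
      have hdl₁ : vcount x vs₁.dropLast = 0 := by
        have := vcount_dropLast x h1.vs_ne_nil
        rw [hlast₁] at this
        simp at this
        omega
      have hvdl : vcount x vs.dropLast
          = vcount x vs₁.dropLast + vcount x vs₂.dropLast := by
        rw [hv, dropLast_append_of_ne_nil _ h2.vs_ne_nil, vcount_append]
      have hc2d : 2 ≤ vcount x vs₂.dropLast := by omega
      have hcnt' : 3 ≤ vcount x (vs₂.dropLast ++ vs₁) := by
        rw [vcount_append]
        have := vcount_pos_of_mem (mem_of_vcount_pos (show 0 < vcount x vs₁ by omega))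
        omega
      -- peel off the first edge of the rotated closed trail
      have hne' : es₂ ++ es₁ ≠ [] := by
        intro hcon
        rcases List.append_eq_nil_iff.1 hcon with ⟨h21, h11⟩
        exact hne (by rw [he, h11, h21]; rfl)
      obtain ⟨e', y, es'', vs'', hE, hV, he', hends', ht', hni'⟩ := h'.peel hne'
      have hcvs'' : 2 ≤ vcount x vs'' := by
        have hxx : vcount x (x :: vs'') = 1 + vcount x vs'' := by simp
        rw [hV, hxx] at hcnt'
        omega
      have hxvs'' : x ∈ vs'' := mem_of_vcount_pos (by omega)
      obtain ⟨es_a, es_b, vs_a, vs_b, ha, hb, hEe, hVe, hca⟩ := ht'.split x hxvs''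
      have hlasta : vs_a.getLast ha.vs_ne_nil = x := ha.getLast_eq
      have hdla : vcount x vs_a.dropLast = 0 := by
        have := vcount_dropLast x ha.vs_ne_nil
        rw [hlasta] at this
        simp at this
        omega
      have hcb : 2 ≤ vcount x vs_b := by
        have : vcount x vs'' = vcount x vs_a.dropLast + vcount x vs_b := by
          rw [hVe, vcount_append]
        omega
      have hvslenb : 2 ≤ vs_b.length := le_trans hcb (vcount_le_length x vs_b)
      have hbne : es_b ≠ [] := by
        intro hcon
        have := hb.length_vs
        rw [hcon] at this
        simp at this
        omega
      have hlenb : es_b.length ≤ n := by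
        have l1 : (es₂ ++ es₁).length = es.length := by
          rw [he]; simp [List.length_append]; omega
        have l2 : (es₂ ++ es₁).length = es''.length + 1 := by rw [hE]; simp
        have l3 : es''.length = es_a.length + es_b.length := by rw [hEe]; simp
        omega
      obtain ⟨D, hD1, hD2⟩ := ih es_b hlenb hbne x vs_b hb
      refine ⟨D, fun z hz => ?_, hD2⟩
      have hz'' : z ∈ es'' := by rw [hEe]; exact List.mem_append_right _ (hD1 z hz)
      have hz' : z ∈ es₂ ++ es₁ := by rw [hE]; exact List.mem_cons_of_mem _ hz''
      rw [he]
      rcases List.mem_append.1 hz' with h | h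
      · exact List.mem_append_right _ h
      · exact List.mem_append_left _ h

end Trail

end Multigraph
namespace Multigraph

variable {V E : Type*} {G : Multigraph V E}

lemma mem_ends_of_mult_ne_zero {e : E} {x : V} (h : G.mult e x ≠ 0) : x ∈ G.ends e := by
  unfold Multigraph.mult at h
  by_cases h1 : G.ends e = Sym2.diag x
  · rw [h1]; exact Sym2.mem_mk_left _ _
  · rw [if_neg h1] at h
    by_cases h2 : x ∈ G.ends e
    · exact h2
    · rw [if_neg h2] at h; exact absurd rfl h

lemma mult_eq_of_ends {e : E} {a b : V} (h : G.ends e = s(a, b)) (x : V) :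
    G.mult e x = (if x = a then 1 else 0) + (if x = b then 1 else 0) := by
  unfold Multigraph.mult
  rw [h]
  by_cases hxa : x = a
  · subst hxa
    by_cases hxb : x = b
    · subst hxb
      have hd : s(x, x) = Sym2.diag x := rfl
      simp [hd]
    · have h1 : ¬ (s(x, b) = Sym2.diag x) := by
        intro hcon
        rw [show Sym2.diag x = s(x, x) from rfl, Sym2.eq_iff] at hcon
        tauto
      simp [h1, Sym2.mem_iff, hxb]
  · by_cases hxb : x = b
    · subst hxb
      have h1 : ¬ (s(a, x) = Sym2.diag x) := by
        intro hcon
        rw [show Sym2.diag x = s(x, x) from rfl, Sym2.eq_iff] at hcon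
        tauto
      simp [h1, Sym2.mem_iff, hxa]
    · have h1 : ¬ (s(a, b) = Sym2.diag x) := by
        intro hcon
        rw [show Sym2.diag x = s(x, x) from rfl, Sym2.eq_iff] at hcon
        tauto
      simp [h1, Sym2.mem_iff, hxa, hxb]

/-- Every nonempty edge set in which all degrees are even contains a cycle. -/
lemma exists_cycle_of_even (S : Finset E) (hne : S.Nonempty)
    (hev : ∀ w, G.deg S w % 2 = 0) : ∃ D, D ⊆ S ∧ G.IsCycle D := by
  classical
  set P : ℕ → Prop := fun k => ∃ (u w : V) (es : List E) (vs : List V),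
    Trail G S u w es vs ∧ es.length = k with hP
  have hbound : ∀ k, P k → k ≤ S.card := by
    rintro k ⟨u, w, es, vs, ht, rfl⟩
    calc es.length = es.toFinset.card := (List.toFinset_card_of_nodup ht.nodup).symm
    _ ≤ S.card := Finset.card_le_card (fun z hz => ht.mem_S z (List.mem_toFinset.1 hz))
  have hP1 : P 1 := by
    obtain ⟨e₀, he₀⟩ := hne
    obtain ⟨a, b, hab⟩ : ∃ a b, G.ends e₀ = s(a, b) := by
      induction G.ends e₀ using Sym2.ind with
      | _ a b => exact ⟨a, b, rfl⟩
    exact ⟨a, b, [e₀], [a, b],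
      Trail.cons he₀ hab (Trail.nil b) List.not_mem_nil, rfl⟩
  have h1card : 1 ≤ S.card := hbound 1 hP1
  set N := Nat.findGreatest P S.card with hN
  have hPN : P N := Nat.findGreatest_spec h1card hP1
  have hN1 : 1 ≤ N := Nat.le_findGreatest h1card hP1
  obtain ⟨u, w, es, vs, ht, hlen⟩ := hPN
  -- maximality: every edge of `S` incident with `u` lies on the trail
  have hS0 : ∀ f ∈ S, u ∈ G.ends f → f ∈ es := by
    intro f hf hu
    by_contra hfes
    obtain ⟨c, hc⟩ := Sym2.mem_iff_exists.1 hu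
    have ht' : Trail G S c w (f :: es) (c :: vs) :=
      Trail.cons hf (by rw [hc]; exact Sym2.eq_swap) ht hfes
    have hPN1 : P (N + 1) := ⟨c, w, f :: es, c :: vs, ht', by simp [hlen]⟩
    exact Nat.findGreatest_is_greatest (by omega) (hbound _ hPN1) hPN1
  -- hence the degree of `u` in the trail equals its degree in `S`, which is even
  have hsub : es.toFinset ⊆ S := fun z hz => ht.mem_S z (List.mem_toFinset.1 hz)
  have hdegeq : G.deg S u = G.deg es.toFinset u := by
    unfold Multigraph.deg
    rw [← Finset.union_sdiff_of_subset hsub, Finset.sum_union Finset.disjoint_sdiff]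
    have : ∑ e ∈ S \ es.toFinset, G.mult e u = 0 := by
      apply Finset.sum_eq_zero
      intro f hf
      rcases Finset.mem_sdiff.1 hf with ⟨hfS, hfes⟩
      by_contra hmz
      exact hfes (List.mem_toFinset.2 (hS0 f hfS (mem_ends_of_mult_ne_zero hmz)))
    rw [this]
    simp
  have hid := ht.deg_identity u
  rw [if_pos rfl] at hid
  have huw : u = w := by
    by_contra huw
    rw [if_neg (fun hh => huw hh)] at hid
    have := hev u
    rw [hdegeq] at this
    omega
  subst huw
  have hesne : es ≠ [] := by
    intro hcon
    rw [hcon] at hlen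
    simp at hlen
    omega
  obtain ⟨D, hD1, hD2⟩ := Trail.closed_cycle es.length es le_rfl hesne u vs ht
  exact ⟨D, fun z hz => ht.mem_S z (hD1 z hz), hD2⟩

/-- Parity of degrees under symmetric difference. -/
lemma deg_symmDiff_parity [DecidableEq E] (A B : Finset E) (x : V) :
    G.deg (A ∆ B) x % 2 = (G.deg A x + G.deg B x) % 2 := by
  have hunion : A ∆ B ∪ (A ∩ B) = A ∪ B := by
    ext z
    simp only [Finset.mem_union, Finset.mem_inter, Finset.mem_symmDiff]
    tauto
  have hdisj : Disjoint (A ∆ B) (A ∩ B) := by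
    rw [Finset.disjoint_left]
    intro z h1 h2
    rw [Finset.mem_symmDiff] at h1
    rw [Finset.mem_inter] at h2
    tauto
  have key : G.deg (A ∆ B) x + G.deg (A ∩ B) x + G.deg (A ∩ B) x
      = G.deg A x + G.deg B x := by
    unfold Multigraph.deg
    rw [show (∑ e ∈ A ∆ B, G.mult e x) + (∑ e ∈ A ∩ B, G.mult e x)
        = ∑ e ∈ A ∆ B ∪ (A ∩ B), G.mult e x from (Finset.sum_union hdisj).symm, hunion]
    exact Finset.sum_union_inter
  omega

end Multigraph
namespace Multigraph

variable {V E : Type*} {G : Multigraph V E}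

/-- From a walk we get an edge set whose odd-degree vertices are exactly the two ends. -/
lemma reach_parity {T : Finset E} {a b : V} (h : G.Reach T a b) :
    ∃ P : Finset E, P ⊆ T ∧ ∀ x : V, G.deg P x % 2
      = ((if x = a then 1 else 0) + (if x = b then 1 else 0)) % 2 := by
  induction h with
  | refl =>
    refine ⟨∅, Finset.empty_subset _, fun x => ?_⟩
    have : G.deg (∅ : Finset E) x = 0 := by simp [Multigraph.deg]
    rw [this]
    by_cases hx : x = a <;> simp [hx]
  | @tail b c hab hbc ih =>
    obtain ⟨P, hPT, hP⟩ := ih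
    obtain ⟨e, heT, hxe, hye⟩ := hbc
    by_cases hbceq : b = c
    · subst hbceq
      exact ⟨P, hPT, hP⟩
    · have hends : G.ends e = s(b, c) := by
        rw [Multigraph.Inc] at hxe hye
        obtain ⟨d₁, hd₁⟩ := Sym2.mem_iff_exists.1 hxe
        rw [hd₁] at hye
        rcases Sym2.mem_iff.1 hye with h1 | h1
        · exact absurd h1.symm hbceq
        · rw [hd₁, h1]
      refine ⟨P ∆ {e}, ?_, fun x => ?_⟩
      · intro z hz
        rcases Finset.mem_symmDiff.1 hz with ⟨h1, _⟩ | ⟨h1, _⟩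
        · exact hPT h1
        · rw [Finset.mem_singleton] at h1; rw [h1]; exact heT
      · have hmult := G.mult_eq_of_ends hends x
        have hsingle : G.deg ({e} : Finset E) x = G.mult e x := by
          simp [Multigraph.deg]
        have hpar := G.deg_symmDiff_parity P {e} x
        rw [hsingle, hmult] at hpar
        have hPx := hP x
        omega

/-- Existence of fundamental cycles. -/
lemma exists_fund_cycle {T : Finset E} (hT : G.IsSpanningTree T) {e : E} (he : e ∉ T) :
    ∃ D : Finset E, G.IsFundCycle T e D := by
  obtain ⟨u, w, hends⟩ : ∃ u w, G.ends e = s(u, w) := by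
    induction G.ends e using Sym2.ind with
    | _ a b => exact ⟨a, b, rfl⟩
  obtain ⟨P, hPT, hP⟩ := reach_parity (hT.1 u w)
  have heP : e ∉ P := fun h => he (hPT h)
  have hins : ∀ x, G.deg (insert e P) x % 2 = 0 := by
    intro x
    have hmult := G.mult_eq_of_ends hends x
    have hdeg : G.deg (insert e P) x = G.mult e x + G.deg P x := by
      unfold Multigraph.deg
      rw [Finset.sum_insert heP]
    have hPx := hP x
    rw [hdeg, hmult]
    omega
  obtain ⟨D, hDsub, hDcyc⟩ := exists_cycle_of_even (insert e P)
    ⟨e, Finset.mem_insert_self _ _⟩ hins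
  have heD : e ∈ D := by
    by_contra heD
    have hDT : D ⊆ T := by
      intro z hz
      rcases Finset.mem_insert.1 (hDsub hz) with h1 | h1
      · exact absurd (h1 ▸ hz) heD
      · exact hPT h1
    exact hT.2 D hDT hDcyc
  refine ⟨D, hDcyc, heD, fun z hz => ?_⟩
  rcases Finset.mem_insert.1 (hDsub hz) with h1 | h1
  · rw [h1]; exact Finset.mem_insert_self _ _
  · exact Finset.mem_insert_of_mem (hPT h1)

/-- A subset of a forest with all degrees even is empty. -/
lemma even_subset_forest_empty {T S : Finset E} (hT : ∀ C ⊆ T, ¬ G.IsCycle C)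
    (hS : S ⊆ T) (hev : ∀ x : V, G.deg S x % 2 = 0) : S = ∅ := by
  by_contra hne
  obtain ⟨D, hD1, hD2⟩ := exists_cycle_of_even S (Finset.nonempty_of_ne_empty hne) hev
  exact hT D (hD1.trans hS) hD2

end Multigraph

section ListSymmDiff

variable {E : Type*} [DecidableEq E]

@[simp] lemma listSymmDiff_nil : listSymmDiff ([] : List (Finset E)) = ∅ := rfl

@[simp] lemma listSymmDiff_cons (A : Finset E) (L : List (Finset E)) :
    listSymmDiff (A :: L) = A ∆ listSymmDiff L := rfl

lemma listSymmDiff_append (L₁ L₂ : List (Finset E)) :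
    listSymmDiff (L₁ ++ L₂) = listSymmDiff L₁ ∆ listSymmDiff L₂ := by
  induction L₁ with
  | nil =>
    simp only [List.nil_append, listSymmDiff_nil]
    rw [show (∅ : Finset E) = (⊥ : Finset E) from rfl, bot_symmDiff]
  | cons A L ih =>
    simp only [List.cons_append, listSymmDiff_cons, ih, symmDiff_assoc]

lemma mem_listSymmDiff_exists {x : E} {L : List (Finset E)} (h : x ∈ listSymmDiff L) :
    ∃ A ∈ L, x ∈ A := by
  induction L with
  | nil => simp at h
  | cons A L ih =>
    rw [listSymmDiff_cons, Finset.mem_symmDiff] at h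
    rcases h with ⟨h1, _⟩ | ⟨h1, _⟩
    · exact ⟨A, List.mem_cons_self, h1⟩
    · obtain ⟨B, hB1, hB2⟩ := ih h1
      exact ⟨B, List.mem_cons_of_mem _ hB1, hB2⟩

lemma not_mem_listSymmDiff {x : E} {L : List (Finset E)} (h : ∀ A ∈ L, x ∉ A) :
    x ∉ listSymmDiff L := by
  intro hx
  obtain ⟨A, hA1, hA2⟩ := mem_listSymmDiff_exists hx
  exact h A hA1 hA2

lemma deg_listSymmDiff_parity {V : Type*} (G : Multigraph V E) (L : List (Finset E))
    (x : V) (h : ∀ A ∈ L, G.deg A x % 2 = 0) : G.deg (listSymmDiff L) x % 2 = 0 := by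
  induction L with
  | nil =>
    simp only [listSymmDiff_nil]
    simp [Multigraph.deg]
  | cons A L ih =>
    rw [listSymmDiff_cons]
    have h1 := G.deg_symmDiff_parity A (listSymmDiff L) x
    have h2 := h A List.mem_cons_self
    have h3 := ih (fun B hB => h B (List.mem_cons_of_mem _ hB))
    omega

end ListSymmDiff

namespace Multigraph

lemma fundCycle_mem_cases {V E : Type*} {G : Multigraph V E} {T : Finset E} {e : E}
    {D : Finset E} (h : G.IsFundCycle T e D) : ∀ z ∈ D, z = e ∨ z ∈ T := by
  intro z hz
  exact Finset.mem_insert.1 (h.2.2 hz)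

end Multigraph
/-- Let `(G, 𝒞)` be a linear biased graph.  If `C` is an unbalanced cycle and `T` is a
spanning tree with `E(C) ∩ E(T) = ∅`, then there is an edge `e ∈ C` whose fundamental
cycle `C(e,T)` is unbalanced. -/
theorem exists_unbalanced_fund_cycle {V E : Type*} [DecidableEq E]
    (Ω : LinearBiasedGraph V E) (C T : Finset E)
    (hC : Ω.G.IsCycle C) (hCunbal : C ∉ Ω.Bal)
    (hT : Ω.G.IsSpanningTree T) (hdisj : ∀ e ∈ C, e ∉ T) :
    ∃ e ∈ C, ∃ D : Finset E, Ω.G.IsFundCycle T e D ∧ D ∉ Ω.Bal := by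
  by_contra hcon
  push_neg at hcon
  have hfund : ∀ e ∈ C, ∃ D, Ω.G.IsFundCycle T e D := fun e he =>
    Multigraph.exists_fund_cycle hT (hdisj e he)
  choose! Dfun hDfun using hfund
  have hfundf : ∀ f ∈ C, Ω.G.IsFundCycle T f (Dfun f) := hDfun
  have hDsub : ∀ f ∈ C, ∀ z ∈ Dfun f, z = f ∨ z ∈ T := fun f hf =>
    Multigraph.fundCycle_mem_cases (hfundf f hf)
  have hDcyc : ∀ f ∈ C, Ω.G.IsCycle (Dfun f) := fun f hf => (hfundf f hf).1
  have hDmem : ∀ f ∈ C, f ∈ Dfun f := fun f hf => (hfundf f hf).2.1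
  set L : List (Finset E) := C.toList.map Dfun with hL
  have hmemL : ∀ A ∈ L, ∃ f ∈ C, A = Dfun f := by
    intro A hA
    rw [hL, List.mem_map] at hA
    obtain ⟨f, hf, rfl⟩ := hA
    exact ⟨f, Finset.mem_toList.1 hf, rfl⟩
  set X := listSymmDiff L with hX
  have hCX : ∀ x ∈ C, x ∈ X := by
    intro x hx
    have hxl : x ∈ C.toList := Finset.mem_toList.2 hx
    obtain ⟨l₁, l₂, hsplit⟩ := List.append_of_mem hxl
    have hnd : (l₁ ++ x :: l₂).Nodup := by
      rw [← hsplit]; exact Finset.nodup_toList C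
    rcases List.nodup_append.1 hnd with ⟨hn1, hn2, hn3⟩
    have hxl₁ : x ∉ l₁ := fun hh => hn3 x hh x List.mem_cons_self rfl
    have hxl₂ : x ∉ l₂ := (List.nodup_cons.1 hn2).1
    have key : ∀ f ∈ C, f ≠ x → x ∉ Dfun f := by
      intro f hf hfx hmem
      rcases hDsub f hf x hmem with h | h
      · exact hfx h.symm
      · exact hdisj x hx h
    have hmap : L = l₁.map Dfun ++ (Dfun x :: l₂.map Dfun) := by
      rw [hL, hsplit]; simp
    rw [hX, hmap, listSymmDiff_append, listSymmDiff_cons]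
    have hx1 : x ∉ listSymmDiff (l₁.map Dfun) := by
      apply not_mem_listSymmDiff
      intro A hA
      rw [List.mem_map] at hA
      obtain ⟨f, hfl, rfl⟩ := hA
      have hfC : f ∈ C := Finset.mem_toList.1 (by
        rw [hsplit]; exact List.mem_append_left _ hfl)
      exact key f hfC (fun hh => hxl₁ (hh ▸ hfl))
    have hx2 : x ∉ listSymmDiff (l₂.map Dfun) := by
      apply not_mem_listSymmDiff
      intro A hA
      rw [List.mem_map] at hA
      obtain ⟨f, hfl, rfl⟩ := hA
      have hfC : f ∈ C := Finset.mem_toList.1 (by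
        rw [hsplit]
        exact List.mem_append_right _ (List.mem_cons_of_mem _ hfl))
      exact key f hfC (fun hh => hxl₂ (hh ▸ hfl))
    rw [Finset.mem_symmDiff]
    refine Or.inr ⟨?_, hx1⟩
    rw [Finset.mem_symmDiff]
    exact Or.inl ⟨hDmem x hx, hx2⟩
  have hS'T : X ∆ C ⊆ T := by
    intro z hz
    rcases Finset.mem_symmDiff.1 hz with ⟨h1, h2⟩ | ⟨h1, h2⟩
    · obtain ⟨A, hA, hzA⟩ := mem_listSymmDiff_exists h1
      obtain ⟨f, hfC, rfl⟩ := hmemL A hA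
      rcases hDsub f hfC z hzA with h | h
      · exact absurd (h ▸ hfC) h2
      · exact h
    · exact absurd (hCX z h1) h2
  have hS'ev : ∀ x : V, Ω.G.deg (X ∆ C) x % 2 = 0 := by
    intro x
    have h1 : Ω.G.deg X x % 2 = 0 := by
      apply deg_listSymmDiff_parity
      intro A hA
      obtain ⟨f, hfC, rfl⟩ := hmemL A hA
      rcases (hDcyc f hfC).2.2 x with h | h <;> simp [h]
    have h2 : Ω.G.deg C x % 2 = 0 := by
      rcases hC.2.2 x with h | h <;> simp [h]
    have h3 := Ω.G.deg_symmDiff_parity X C x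
    omega
  have hS' : X ∆ C = ∅ := Multigraph.even_subset_forest_empty hT.2 hS'T hS'ev
  have hXC : X = C := by
    rw [← Finset.bot_eq_empty] at hS'
    exact symmDiff_eq_bot.1 hS'
  have hbal : ∀ A ∈ L, A ∈ Ω.Bal := by
    intro A hA
    obtain ⟨f, hfC, rfl⟩ := hmemL A hA
    exact hcon f hfC (Dfun f) (hfundf f hfC)
  exact hCunbal (Ω.linear L hbal C hC hXC.symm)
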